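/- Let k, g be scalar-valued reproducing kernels on Y and T_p: X → Y for p = 1,…,n be maps with ∪_{p=1}^n T_p(X) = Y. Define the matrix-valued kernels K(x,y) := [k(T_p x, T_q y)]_{p,q=1}^n and G(x,y) := [g(T_p x, T_q y)]_{p,q=1}^n on X with values in 𝓛(ℂⁿ). Then H_K ⪯ H_G if and only if H_k ⪯ H_g. -/

import Mathlib

/-!
Both `H_k` and `H_K` are spanned by kernel sections whose Gram matrices coincide:
`⟪K(·, x) e_p, K(·, y) e_q⟫ = k(T_q y, T_p x) = ⟪k(·, T_p x), k(·, T_q y)⟫`,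
and since the `T_p` cover `Y` the sections `k(·, T_p x)` span a dense subspace of `H_k`.
Hence there is a unitary `H_k ≃ H_K` which, read through the reproducing property, is
`f ↦ (x ↦ (f (T_q x))_q)`, and likewise for `g` and `G`. The relation `⪯` is transported
along both unitaries, and back because `f ↦ (x ↦ (f (T_q x))_q)` is injective.
-/

open MeasureTheory ContinuousLinearMap
open scoped ComplexOrder

noncomputable section

local notation "⟪" x ", " y "⟫" => @inner ℂ _ _ x y

section Defs

variable {X : Type*} {Λ : Type*} [NormedAddCommGroup Λ] [InnerProductSpace ℂ Λ]

/-- Data exhibiting a Hilbert space `H`, embedded in the `Λ`-valued functions on `X` by `J`,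
as the reproducing kernel Hilbert space of the operator-valued kernel `K`;
`kf x ξ` is the element representing `K(x,·)ξ`. -/
structure IsVRKHS (K : X → X → Λ →L[ℂ] Λ) (H : Type*) [NormedAddCommGroup H]
    [InnerProductSpace ℂ H] (J : H →ₗ[ℂ] (X → Λ)) (kf : X → Λ → H) : Prop where
  inj : Function.Injective J
  kfun_eq : ∀ (x : X) (ξ : Λ), J (kf x ξ) = fun y => K x y ξ
  repro : ∀ (f : H) (x : X) (ξ : Λ), ⟪kf x ξ, f⟫ = ⟪ξ, J f x⟫

/-- Data exhibiting `H` as the RKHS of a scalar-valued kernel `k` on `Y`. -/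
structure IsSRKHS {Y : Type*} (k : Y → Y → ℂ) (H : Type*) [NormedAddCommGroup H]
    [InnerProductSpace ℂ H] (J : H →ₗ[ℂ] (Y → ℂ)) (kf : Y → H) : Prop where
  inj : Function.Injective J
  kfun_eq : ∀ y : Y, J (kf y) = fun z => k y z
  repro : ∀ (f : H) (y : Y), ⟪kf y, f⟫ = J f y

/-- `H₁ ⪯ H₂` : every element of `H₁` is an element of `H₂` (as functions) with the same norm. -/
def RKHSle {H₁ H₂ V : Type*} [NormedAddCommGroup H₁] [InnerProductSpace ℂ H₁]
    [NormedAddCommGroup H₂] [InnerProductSpace ℂ H₂] [AddCommGroup V] [Module ℂ V]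
    (J₁ : H₁ →ₗ[ℂ] V) (J₂ : H₂ →ₗ[ℂ] V) : Prop :=
  ∀ f : H₁, ∃ g : H₂, J₂ g = J₁ f ∧ ‖g‖ = ‖f‖

/-- `K` is an `𝓛(Λ)`-valued reproducing kernel: hermitian and positive-definite. -/
def IsOpKernel [CompleteSpace Λ] (K : X → X → Λ →L[ℂ] Λ) : Prop :=
  (∀ x y, K x y = ContinuousLinearMap.adjoint (K y x)) ∧
    ∀ (n : ℕ) (x : Fin n → X) (ξ : Fin n → Λ),
      0 ≤ ∑ j, ∑ k, ⟪ξ k, K (x j) (x k) (ξ j)⟫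

/-- `k` is a scalar-valued reproducing kernel: hermitian and positive-definite. -/
def IsScalarKernel {Y : Type*} (k : Y → Y → ℂ) : Prop :=
  (∀ y z, k z y = starRingEnd ℂ (k y z)) ∧
    ∀ (n : ℕ) (y : Fin n → Y) (c : Fin n → ℂ),
      0 ≤ ∑ j, ∑ l, starRingEnd ℂ (c l) * c j * k (y j) (y l)

/-- The relation `A ⪯ B` for positive operators. -/
def OpPrec (A B : Λ →L[ℂ] Λ) : Prop :=
  ∀ ξ : Λ, ∃ η : Λ, A ξ = B η ∧ ⟪ξ, A ξ⟫ = ⟪η, B η⟫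

end Defs

open scoped InnerProductSpace

section GramMatrix

variable {𝕜 E F ι : Type*} [RCLike 𝕜] [NormedAddCommGroup E] [InnerProductSpace 𝕜 E]
  [NormedAddCommGroup F] [InnerProductSpace 𝕜 F]

theorem norm_linearCombination_eq_of_inner_eq {u : ι → E} {v : ι → F}
    (huv : ∀ i j, ⟪u i, u j⟫_𝕜 = ⟪v i, v j⟫_𝕜) (c : ι →₀ 𝕜) :
    ‖Finsupp.linearCombination 𝕜 u c‖ = ‖Finsupp.linearCombination 𝕜 v c‖ := by
  have hinner : ⟪Finsupp.linearCombination 𝕜 u c, Finsupp.linearCombination 𝕜 u c⟫_𝕜 =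
      ⟪Finsupp.linearCombination 𝕜 v c, Finsupp.linearCombination 𝕜 v c⟫_𝕜 := by
    simp only [Finsupp.linearCombination_apply, Finsupp.sum_inner, Finsupp.inner_sum,
      inner_smul_left, inner_smul_right, huv]
  rw [norm_eq_sqrt_re_inner (𝕜 := 𝕜), norm_eq_sqrt_re_inner (𝕜 := 𝕜), hinner]

theorem denseRange_linearCombination_of_inner_eq_zero [CompleteSpace E] {u : ι → E}
    (hu : ∀ f, (∀ i, ⟪u i, f⟫_𝕜 = 0) → f = 0) :
    DenseRange (Finsupp.linearCombination 𝕜 u) := by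
  rw [DenseRange, ← LinearMap.coe_range, Finsupp.range_linearCombination,
    Submodule.dense_iff_topologicalClosure_eq_top, Submodule.topologicalClosure_eq_top_iff,
    Submodule.eq_bot_iff]
  exact fun f hf => hu f fun i => Submodule.inner_right_of_mem_orthogonal
    (Submodule.subset_span (Set.mem_range_self i)) hf

theorem exists_linearIsometryEquiv_of_inner_eq [CompleteSpace E] [CompleteSpace F]
    {u : ι → E} {v : ι → F} (huv : ∀ i j, ⟪u i, u j⟫_𝕜 = ⟪v i, v j⟫_𝕜)
    (hu : ∀ f, (∀ i, ⟪u i, f⟫_𝕜 = 0) → f = 0)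
    (hv : ∀ f, (∀ i, ⟪v i, f⟫_𝕜 = 0) → f = 0) :
    ∃ Φ : E ≃ₗᵢ[𝕜] F, ∀ i, Φ (u i) = v i := by
  have hnorm (c : ι →₀ 𝕜) := (norm_linearCombination_eq_of_inner_eq huv c).symm
  have hdu := denseRange_linearCombination_of_inner_eq_zero hu
  have hdv := denseRange_linearCombination_of_inner_eq_zero hv
  refine ⟨(LinearEquiv.refl 𝕜 (ι →₀ 𝕜)).extendOfIsometry _ _ hdu hdv hnorm, fun i => ?_⟩
  simpa using LinearEquiv.extendOfIsometry_eq (LinearEquiv.refl 𝕜 (ι →₀ 𝕜)) _ _ hdu hdv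
    hnorm (Finsupp.single i 1)

end GramMatrix

namespace IsSRKHS

variable {Y H : Type*} [NormedAddCommGroup H] [InnerProductSpace ℂ H] {k : Y → Y → ℂ}
  {J : H →ₗ[ℂ] (Y → ℂ)} {kf : Y → H}

theorem inner_kf_kf (hH : IsSRKHS k H J kf) (y z : Y) : ⟪kf y, kf z⟫ = k z y := by
  rw [hH.repro, hH.kfun_eq]

theorem eq_zero_of_inner_kf_eq_zero (hH : IsSRKHS k H J kf) {f : H}
    (hf : ∀ y, ⟪kf y, f⟫ = 0) : f = 0 :=
  hH.inj <| funext fun y => by rw [← hH.repro, hf, map_zero, Pi.zero_apply]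

end IsSRKHS

namespace IsVRKHS

variable {X ι H : Type*} [Fintype ι] [DecidableEq ι] [NormedAddCommGroup H]
  [InnerProductSpace ℂ H] {K : X → X → EuclideanSpace ℂ ι →L[ℂ] EuclideanSpace ℂ ι}
  {J : H →ₗ[ℂ] (X → EuclideanSpace ℂ ι)} {kf : X → EuclideanSpace ℂ ι → H}

theorem apply_eq_inner_kf_single (hH : IsVRKHS K H J kf) (f : H) (x : X) (q : ι) :
    J f x q = ⟪kf x (EuclideanSpace.single q 1), f⟫ := by
  rw [hH.repro, EuclideanSpace.inner_single_left, map_one, one_mul]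

theorem inner_kf_single_kf_single (hH : IsVRKHS K H J kf) (x y : X) (p q : ι) :
    ⟪kf x (EuclideanSpace.single p 1), kf y (EuclideanSpace.single q 1)⟫ =
      K y x (EuclideanSpace.single q 1) p := by
  rw [← hH.apply_eq_inner_kf_single, hH.kfun_eq]

theorem eq_zero_of_inner_kf_single_eq_zero (hH : IsVRKHS K H J kf) {f : H}
    (hf : ∀ x q, ⟪kf x (EuclideanSpace.single q 1), f⟫ = 0) : f = 0 :=
  hH.inj <| funext fun x => PiLp.ext fun q => by
    rw [hH.apply_eq_inner_kf_single, hf, map_zero]; rfl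

end IsVRKHS

theorem rkhsle_iff_of_linearIsometryEquiv {H₁ H₂ H₁' H₂' V W : Type*}
    [NormedAddCommGroup H₁] [InnerProductSpace ℂ H₁] [NormedAddCommGroup H₂]
    [InnerProductSpace ℂ H₂] [NormedAddCommGroup H₁'] [InnerProductSpace ℂ H₁']
    [NormedAddCommGroup H₂'] [InnerProductSpace ℂ H₂'] [AddCommGroup V] [Module ℂ V]
    [AddCommGroup W] [Module ℂ W] {J₁ : H₁ →ₗ[ℂ] V} {J₂ : H₂ →ₗ[ℂ] V}
    {J₁' : H₁' →ₗ[ℂ] W} {J₂' : H₂' →ₗ[ℂ] W} {C : V → W} (hC : Function.Injective C)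
    (Φ₁ : H₁ ≃ₗᵢ[ℂ] H₁') (Φ₂ : H₂ ≃ₗᵢ[ℂ] H₂')
    (hΦ₁ : ∀ f, J₁' (Φ₁ f) = C (J₁ f)) (hΦ₂ : ∀ f, J₂' (Φ₂ f) = C (J₂ f)) :
    RKHSle J₁' J₂' ↔ RKHSle J₁ J₂ := by
  constructor
  · intro h f
    obtain ⟨g', hJ, hnorm⟩ := h (Φ₁ f)
    refine ⟨Φ₂.symm g', hC ?_, by rw [Φ₂.symm.norm_map, hnorm, Φ₁.norm_map]⟩
    rw [← hΦ₂, ← hΦ₁, Φ₂.apply_symm_apply, hJ]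
  · intro h F
    obtain ⟨g, hJ, hnorm⟩ := h (Φ₁.symm F)
    refine ⟨Φ₂ g, ?_, by rw [Φ₂.norm_map, hnorm, Φ₁.symm.norm_map]⟩
    rw [hΦ₂, hJ, ← hΦ₁, Φ₁.apply_symm_apply]

section TransformationKernel

variable {X Y : Type*} {n : ℕ}

def transform (T : Fin n → X → Y) (φ : Y → ℂ) : X → EuclideanSpace ℂ (Fin n) :=
  fun x => WithLp.toLp 2 fun q => φ (T q x)

theorem transform_injective {T : Fin n → X → Y}
    (hsurj : ∀ y : Y, ∃ (p : Fin n) (x : X), T p x = y) :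
    Function.Injective (transform T) := fun φ ψ h => funext fun y => by
  obtain ⟨q, x, rfl⟩ := hsurj y
  exact congrArg (fun F => F x q) h

theorem exists_linearIsometryEquiv_transform (k : Y → Y → ℂ) (T : Fin n → X → Y)
    (hsurj : ∀ y : Y, ∃ (p : Fin n) (x : X), T p x = y)
    (K : X → X → EuclideanSpace ℂ (Fin n) →L[ℂ] EuclideanSpace ℂ (Fin n))
    (hKdef : ∀ (x y : X) (ξ : EuclideanSpace ℂ (Fin n)) (q : Fin n),
      K x y ξ q = ∑ p, k (T p x) (T q y) * ξ p)
    {Hk : Type*} [NormedAddCommGroup Hk] [InnerProductSpace ℂ Hk] [CompleteSpace Hk]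
    {Jk : Hk →ₗ[ℂ] (Y → ℂ)} {kfk : Y → Hk} (hHk : IsSRKHS k Hk Jk kfk)
    {HK : Type*} [NormedAddCommGroup HK] [InnerProductSpace ℂ HK] [CompleteSpace HK]
    {JK : HK →ₗ[ℂ] (X → EuclideanSpace ℂ (Fin n))}
    {kfK : X → EuclideanSpace ℂ (Fin n) → HK}
    (hHK : IsVRKHS K HK JK kfK) :
    ∃ Φ : Hk ≃ₗᵢ[ℂ] HK, ∀ f, JK (Φ f) = transform T (Jk f) := by
  have hgram (i j : Fin n × X) :
      ⟪kfk (T i.1 i.2), kfk (T j.1 j.2)⟫ =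
        ⟪kfK i.2 (EuclideanSpace.single i.1 1), kfK j.2 (EuclideanSpace.single j.1 1)⟫ := by
    rw [hHK.inner_kf_single_kf_single, hKdef, hHk.inner_kf_kf]
    simp
  have htotal (f : Hk) (hf : ∀ i : Fin n × X, ⟪kfk (T i.1 i.2), f⟫ = 0) : f = 0 :=
    hHk.eq_zero_of_inner_kf_eq_zero fun y => by
      obtain ⟨q, x, rfl⟩ := hsurj y
      exact hf (q, x)
  obtain ⟨Φ, hΦ⟩ := exists_linearIsometryEquiv_of_inner_eq hgram htotal
    fun F hF => hHK.eq_zero_of_inner_kf_single_eq_zero fun x q => hF (q, x)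
  refine ⟨Φ, fun f => funext fun x => PiLp.ext fun q => ?_⟩
  rw [hHK.apply_eq_inner_kf_single, ← hΦ (q, x), LinearIsometryEquiv.inner_map_map, hHk.repro]
  rfl

end TransformationKernel

theorem stmt17_general {X Y : Type*} (n : ℕ) (k g : Y → Y → ℂ)
    (T : Fin n → X → Y) (hsurj : ∀ y : Y, ∃ (p : Fin n) (x : X), T p x = y)
    (K G : X → X → EuclideanSpace ℂ (Fin n) →L[ℂ] EuclideanSpace ℂ (Fin n))
    (hKdef : ∀ (x y : X) (ξ : EuclideanSpace ℂ (Fin n)) (q : Fin n),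
      K x y ξ q = ∑ p, k (T p x) (T q y) * ξ p)
    (hGdef : ∀ (x y : X) (ξ : EuclideanSpace ℂ (Fin n)) (q : Fin n),
      G x y ξ q = ∑ p, g (T p x) (T q y) * ξ p)
    {Hk : Type*} [NormedAddCommGroup Hk] [InnerProductSpace ℂ Hk] [CompleteSpace Hk]
    (Jk : Hk →ₗ[ℂ] (Y → ℂ)) (kfk : Y → Hk) (hHk : IsSRKHS k Hk Jk kfk)
    {Hg : Type*} [NormedAddCommGroup Hg] [InnerProductSpace ℂ Hg] [CompleteSpace Hg]
    (Jg : Hg →ₗ[ℂ] (Y → ℂ)) (kfg : Y → Hg) (hHg : IsSRKHS g Hg Jg kfg)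
    {HK : Type*} [NormedAddCommGroup HK] [InnerProductSpace ℂ HK] [CompleteSpace HK]
    (JK : HK →ₗ[ℂ] (X → EuclideanSpace ℂ (Fin n))) (kfK : X → EuclideanSpace ℂ (Fin n) → HK)
    (hHK : IsVRKHS K HK JK kfK)
    {HG : Type*} [NormedAddCommGroup HG] [InnerProductSpace ℂ HG] [CompleteSpace HG]
    (JG : HG →ₗ[ℂ] (X → EuclideanSpace ℂ (Fin n))) (kfG : X → EuclideanSpace ℂ (Fin n) → HG)
    (hHG : IsVRKHS G HG JG kfG) :
    RKHSle JK JG ↔ RKHSle Jk Jg := by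
  obtain ⟨ΦK, hΦK⟩ := exists_linearIsometryEquiv_transform k T hsurj K hKdef hHk hHK
  obtain ⟨ΦG, hΦG⟩ := exists_linearIsometryEquiv_transform g T hsurj G hGdef hHg hHG
  exact rkhsle_iff_of_linearIsometryEquiv (transform_injective hsurj) ΦK ΦG hΦK hΦG

/-- For transformation kernels K(x,y) = [k(T_p x, T_q y)]_{p,q} and
G(x,y) = [g(T_p x, T_q y)]_{p,q} with ∪_p T_p(X) = Y, H_K ⪯ H_G iff H_k ⪯ H_g. -/
theorem stmt17 {X Y : Type*} (n : ℕ) (k g : Y → Y → ℂ)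
    (hk : IsScalarKernel k) (hg : IsScalarKernel g)
    (T : Fin n → X → Y) (hsurj : ∀ y : Y, ∃ (p : Fin n) (x : X), T p x = y)
    (K G : X → X → EuclideanSpace ℂ (Fin n) →L[ℂ] EuclideanSpace ℂ (Fin n))
    (hKdef : ∀ (x y : X) (ξ : EuclideanSpace ℂ (Fin n)) (q : Fin n),
      K x y ξ q = ∑ p, k (T p x) (T q y) * ξ p)
    (hGdef : ∀ (x y : X) (ξ : EuclideanSpace ℂ (Fin n)) (q : Fin n),
      G x y ξ q = ∑ p, g (T p x) (T q y) * ξ p)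
    {Hk : Type*} [NormedAddCommGroup Hk] [InnerProductSpace ℂ Hk] [CompleteSpace Hk]
    (Jk : Hk →ₗ[ℂ] (Y → ℂ)) (kfk : Y → Hk) (hHk : IsSRKHS k Hk Jk kfk)
    {Hg : Type*} [NormedAddCommGroup Hg] [InnerProductSpace ℂ Hg] [CompleteSpace Hg]
    (Jg : Hg →ₗ[ℂ] (Y → ℂ)) (kfg : Y → Hg) (hHg : IsSRKHS g Hg Jg kfg)
    {HK : Type*} [NormedAddCommGroup HK] [InnerProductSpace ℂ HK] [CompleteSpace HK]
    (JK : HK →ₗ[ℂ] (X → EuclideanSpace ℂ (Fin n))) (kfK : X → EuclideanSpace ℂ (Fin n) → HK)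
    (hHK : IsVRKHS K HK JK kfK)
    {HG : Type*} [NormedAddCommGroup HG] [InnerProductSpace ℂ HG] [CompleteSpace HG]
    (JG : HG →ₗ[ℂ] (X → EuclideanSpace ℂ (Fin n))) (kfG : X → EuclideanSpace ℂ (Fin n) → HG)
    (hHG : IsVRKHS G HG JG kfG) :
    RKHSle JK JG ↔ RKHSle Jk Jg :=
  stmt17_general n k g T hsurj K G hKdef hGdef Jk kfk hHk Jg kfg hHg JK kfK hHK JG kfG hHG
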